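/- arXiv:2006.12970 — 2 statements merged into one kernel-verified Lean document; each statement's English description precedes it below -/
import Mathlib

section
/- With notation as in the definition of the array-type polynomials and the 3-variable truncated exponential-Gould-Hopper polynomials, the following explicit formula holds: _{eH}P_{n-kα,β}^{(-α,m,r)}(x,y,z;k,a,b) = (α! a^{bα}/2^{(1-k)α}) · ((n-kα)!/n!) · Σ_{p=0}^{n} binom(n,p) S(p, α; (β/a)^b) · _eH_{n-p}^{(m,r)}(x,y,z), where S(p,α;λ) := S(0;p,α;λ) are the λ-Stirling numbers of the second kind. -/
open scoped BigOperators

/-- The exponential series `e^{ct}` in `ℂ[[t]]`. -/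
noncomputable def expC (c : ℂ) : PowerSeries ℂ :=
  PowerSeries.mk fun n => c ^ n / n.factorial

/-- The series `e^{y t^m} = ∑_k y^k t^{mk}/k!` in `ℂ[[t]]`. -/
noncomputable def expMonC (y : ℂ) (m : ℕ) : PowerSeries ℂ :=
  PowerSeries.mk fun n => if m ∣ n then y ^ (n / m) / (n / m).factorial else 0

/-!
Since `a > 0`, the Apostol factor splits as `β^b e^t - a^b = a^b (λ e^t - 1)` with
`λ = (β/a)^b`, so its `α`-th power is `a^{bα} α!` times the exponential generating function
of `S(·, α; λ)`. Multiplying by the generating function of the `_eH_n^{(m,r)}` and cancelling the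
unit `1 - z t^r` identifies `2^{(1-k)α} t^{kα}` times the generating function of the `P_n` with
a product of two exponential generating functions, whose `n`-th coefficient is the binomial
convolution on the right-hand side.
-/

open PowerSeries

namespace Complex

theorem ofReal_mul_cpow {ρ : ℝ} (hρ : 0 < ρ) (w c : ℂ) :
    ((ρ : ℂ) * w) ^ c = (ρ : ℂ) ^ c * w ^ c := by
  rcases eq_or_ne w 0 with rfl | hw
  · rcases eq_or_ne c 0 with rfl | hc
    · simp
    · simp [zero_cpow hc]
  have hρ0 : (ρ : ℂ) ≠ 0 := ofReal_ne_zero.mpr hρ.ne'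
  rw [cpow_def_of_ne_zero (mul_ne_zero hρ0 hw), cpow_def_of_ne_zero hρ0, cpow_def_of_ne_zero hw,
    mul_comm (ρ : ℂ) w, log_mul_ofReal ρ hρ w hw, add_mul, exp_add, ofReal_log hρ.le]

theorem ofReal_cpow_mul_div_ofReal_cpow {ρ : ℝ} (hρ : 0 < ρ) (w c : ℂ) :
    (ρ : ℂ) ^ c * (w / ρ) ^ c = w ^ c := by
  rw [← ofReal_mul_cpow hρ, mul_div_cancel₀ w (ofReal_ne_zero.mpr hρ.ne')]

end Complex

namespace PowerSeries

theorem isUnit_one_sub_C_mul_X_pow {R : Type*} [CommRing R] {r : ℕ} (hr : r ≠ 0) (z : R) :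
    IsUnit (1 - C z * X ^ r : R⟦X⟧) :=
  isUnit_iff_constantCoeff.mpr (by simp [zero_pow hr])

theorem coeff_mk_div_factorial_mul_mk_div_factorial {K : Type*} [Field K] [CharZero K]
    (f g : ℕ → K) (n : ℕ) :
    coeff n (mk (fun p => f p / p.factorial) * mk (fun p => g p / p.factorial)) =
      (∑ p ∈ Finset.range (n + 1), (n.choose p : K) * f p * g (n - p)) / n.factorial := by
  rw [coeff_mul, Finset.Nat.sum_antidiagonal_eq_sum_range_succ_mk, Finset.sum_div]
  refine Finset.sum_congr rfl fun p hp => ?_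
  have hpn : p ≤ n := Nat.lt_succ_iff.mp (Finset.mem_range.mp hp)
  simp only [coeff_mk]
  rw [Nat.cast_choose K hpn]
  have hn : (n.factorial : K) ≠ 0 := Nat.cast_ne_zero.mpr n.factorial_ne_zero
  field_simp

end PowerSeries

theorem negative_order_apostol_tegh_stirling_general
    (a b : ℝ) (ha : 0 < a) (β : ℂ) (x y z : ℝ)
    (k α m r : ℕ) (hr : 1 ≤ r)
    (St Q EH : ℕ → ℂ)
    (hSt : (PowerSeries.C ((β / (a : ℂ)) ^ (b : ℂ)) * expC 1 - 1) ^ α =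
        PowerSeries.C (α.factorial : ℂ) * PowerSeries.mk (fun n => St n / n.factorial))
    (hEH : PowerSeries.mk (fun n => EH n / n.factorial) *
        (1 - PowerSeries.C (z : ℂ) * PowerSeries.X ^ r) =
        expC (x : ℂ) * expMonC (y : ℂ) m)
    (hQ : (PowerSeries.C (β ^ (b : ℂ)) * expC 1 -
          PowerSeries.C ((a ^ b : ℝ) : ℂ)) ^ α * (expC (x : ℂ) * expMonC (y : ℂ) m) =
        PowerSeries.C ((((2 : ℝ) ^ ((1 : ℝ) - (k : ℝ)) : ℝ) : ℂ)) ^ α *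
          PowerSeries.X ^ (k * α) *
          ((1 - PowerSeries.C (z : ℂ) * PowerSeries.X ^ r) *
            PowerSeries.mk (fun n => Q n / n.factorial)))
    (n : ℕ) (hn : k * α ≤ n) :
    Q (n - k * α) =
      (α.factorial : ℂ) * (((a ^ b : ℝ) : ℂ)) ^ α /
          ((((2 : ℝ) ^ ((1 : ℝ) - (k : ℝ)) : ℝ) : ℂ)) ^ α *
        (((n - k * α).factorial : ℂ) / (n.factorial : ℂ)) *
        ∑ p ∈ Finset.range (n + 1), (n.choose p : ℂ) * St p * EH (n - p) := by
  set A : ℂ := ((a ^ b : ℝ) : ℂ)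
  set c : ℂ := (((2 : ℝ) ^ ((1 : ℝ) - (k : ℝ)) : ℝ) : ℂ)
  have hfactor :
      C (β ^ (b : ℂ)) * expC 1 - C A = C A * (C ((β / a) ^ (b : ℂ)) * expC 1 - 1) := by
    rw [← Complex.ofReal_cpow_mul_div_ofReal_cpow ha β, ← Complex.ofReal_cpow ha.le, map_mul]
    ring
  have hgf : C (A ^ α * α.factorial) *
        (mk (fun n => St n / n.factorial) * mk (fun n => EH n / n.factorial)) =
      C (c ^ α) * (X ^ (k * α) * mk (fun n => Q n / n.factorial)) := by
    refine (isUnit_one_sub_C_mul_X_pow (Nat.one_le_iff_ne_zero.mp hr) (z : ℂ)).mul_right_cancel ?_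
    calc _ = (C A * (C ((β / a) ^ (b : ℂ)) * expC 1 - 1)) ^ α *
          (mk (fun n => EH n / n.factorial) * (1 - C (z : ℂ) * X ^ r)) := by
          rw [mul_pow, hSt, map_mul, map_pow]; ring
      _ = C c ^ α * X ^ (k * α) *
            ((1 - C (z : ℂ) * X ^ r) * mk (fun n => Q n / n.factorial)) := by
          rw [hEH, ← hfactor]; exact hQ
      _ = _ := by rw [map_pow]; ring
  have hcoeff := congrArg (coeff n) hgf
  rw [coeff_C_mul, coeff_C_mul, coeff_X_pow_mul', if_pos hn, coeff_mk,
    coeff_mk_div_factorial_mul_mk_div_factorial] at hcoeff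
  have hc : c ≠ 0 := Complex.ofReal_ne_zero.mpr (Real.rpow_pos_of_pos two_pos _).ne'
  have hM : ((n - k * α).factorial : ℂ) ≠ 0 := Nat.cast_ne_zero.mpr (Nat.factorial_ne_zero _)
  calc Q (n - k * α)
      = c ^ α * (Q (n - k * α) / (n - k * α).factorial) * (n - k * α).factorial / c ^ α := by
        field_simp
    _ = _ := by rw [← hcoeff]; ring

/-- Explicit formula for the negative-order unified Apostol type-truncated
exponential-Gould-Hopper polynomials in terms of the λ-Stirling numbers of the
second kind `St p = S(p,α;(β/a)^b)` and the 3-variable truncated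
exponential-Gould-Hopper polynomials `EH`.  All generating functions are stated
with denominators cleared. -/
theorem negative_order_apostol_tegh_stirling
    (a b : ℝ) (ha : 0 < a) (hb : 0 < b) (β : ℂ) (x y z : ℝ)
    (k α m r : ℕ) (hk : 1 ≤ k) (hα : 1 ≤ α) (hm : 1 ≤ m) (hr : 1 ≤ r)
    (St Q EH : ℕ → ℂ)
    (hSt : (PowerSeries.C ((β / (a : ℂ)) ^ (b : ℂ)) * expC 1 - 1) ^ α =
        PowerSeries.C (α.factorial : ℂ) * PowerSeries.mk (fun n => St n / n.factorial))
    (hEH : PowerSeries.mk (fun n => EH n / n.factorial) *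
        (1 - PowerSeries.C (z : ℂ) * PowerSeries.X ^ r) =
        expC (x : ℂ) * expMonC (y : ℂ) m)
    (hQ : (PowerSeries.C (β ^ (b : ℂ)) * expC 1 -
          PowerSeries.C ((a ^ b : ℝ) : ℂ)) ^ α * (expC (x : ℂ) * expMonC (y : ℂ) m) =
        PowerSeries.C ((((2 : ℝ) ^ ((1 : ℝ) - (k : ℝ)) : ℝ) : ℂ)) ^ α *
          PowerSeries.X ^ (k * α) *
          ((1 - PowerSeries.C (z : ℂ) * PowerSeries.X ^ r) *
            PowerSeries.mk (fun n => Q n / n.factorial)))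
    (n : ℕ) (hn : k * α ≤ n) :
    Q (n - k * α) =
      (α.factorial : ℂ) * (((a ^ b : ℝ) : ℂ)) ^ α /
          ((((2 : ℝ) ^ ((1 : ℝ) - (k : ℝ)) : ℝ) : ℂ)) ^ α *
        (((n - k * α).factorial : ℂ) / (n.factorial : ℂ)) *
        ∑ p ∈ Finset.range (n + 1), (n.choose p : ℂ) * St p * EH (n - p) :=
  negative_order_apostol_tegh_stirling_general a b ha β x y z k α m r hr St Q EH hSt hEH hQ n hn
end

section
/- Symmetry identity I: for all positive integers l, q, integer α ≥ 1, and n ≥ 0, Σ_{j=0}^n Σ_{i=0}^j (l^{n-j} q^j / ((n-j)! i! (j-i)!)) _{eH}P_{n-j,β}^{(α,m,r)}(qx,q^my,q^rz;k,a,b) S_i(l-1;(β/a)^b) _{eH}P_{j-i,β}^{(α-1,m,r)}(lX,l^mY,l^rZ;k,a,b) · q^{kα} l^{k(α-1)} = Σ_{j=0}^n Σ_{i=0}^j (q^{n-j} l^j / ((n-j)! i! (j-i)!)) _{eH}P_{n-j,β}^{(α,m,r)}(lx,l^my,l^rz;k,a,b) S_i(q-1;(β/a)^b) _{eH}P_{j-i,β}^{(α-1,m,r)}(qX,q^mY,q^rZ;k,a,b)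 · l^{kα} q^{k(α-1)}. -/
open scoped BigOperators
open PowerSeries Finset

lemma rescale_expC (c d : ℂ) : rescale c (expC d) = expC (c * d) := by
  ext n
  simp [coeff_rescale, expC, mul_pow, mul_div_assoc]

lemma rescale_expMonC (c y : ℂ) (m : ℕ) :
    rescale c (expMonC y m) = expMonC (c ^ m * y) m := by
  ext n
  simp only [coeff_rescale, expMonC, coeff_mk]
  split_ifs with h
  · obtain ⟨d, rfl⟩ := h
    rcases Nat.eq_zero_or_pos m with rfl | hm
    · simp
    · rw [Nat.mul_div_cancel_left _ hm, mul_pow, ← pow_mul, mul_div_assoc]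
  · simp

lemma constantCoeff_expC (d : ℂ) : PowerSeries.constantCoeff (expC d) = 1 := by
  simp [expC, ← coeff_zero_eq_constantCoeff]

lemma constantCoeff_expMonC (y : ℂ) (m : ℕ) :
    PowerSeries.constantCoeff (expMonC y m) = 1 := by
  simp [expMonC, ← coeff_zero_eq_constantCoeff]

lemma expC_ne_zero (d : ℂ) : expC d ≠ 0 := fun h => by
  simpa [h] using constantCoeff_expC d

lemma expMonC_ne_zero (y : ℂ) (m : ℕ) : expMonC y m ≠ 0 := fun h => by
  simpa [h] using constantCoeff_expMonC y m

lemma C_ne_zero' {u : ℂ} (h : u ≠ 0) : (PowerSeries.C u) ≠ 0 :=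
  fun h0 => h (by simpa using congrArg (PowerSeries.constantCoeff) h0)

lemma dd_ne_zero (μ t : ℂ) (ht : t ≠ 0) :
    PowerSeries.C μ * expC t - 1 ≠ 0 := by
  intro h
  have h0 := congrArg (PowerSeries.coeff 0) h
  have h1 := congrArg (PowerSeries.coeff 1) h
  simp [expC, coeff_one] at h0 h1
  rcases h1 with h1 | h1
  · rw [h1] at h0; simp at h0
  · exact ht h1

lemma cpow_div_mul (a : ℝ) (ha : 0 < a) (β : ℂ) (b : ℝ) (hb : b ≠ 0) :
    (β / (a : ℂ)) ^ (b : ℂ) * ((a ^ b : ℝ) : ℂ) = β ^ (b : ℂ) := by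
  have hbc : (b : ℂ) ≠ 0 := by exact_mod_cast hb
  rw [Complex.ofReal_cpow ha.le]
  rcases eq_or_ne β 0 with rfl | hβ
  · rw [zero_div, Complex.zero_cpow hbc, zero_mul]
  · have ha' : (a : ℂ) ≠ 0 := Complex.ofReal_ne_zero.mpr ha.ne'
    have hd : β / (a : ℂ) ≠ 0 := div_ne_zero hβ ha'
    rw [Complex.cpow_def_of_ne_zero hd, Complex.cpow_def_of_ne_zero ha',
      Complex.cpow_def_of_ne_zero hβ, ← Complex.exp_add, ← add_mul]
    congr 1
    have : β / (a : ℂ) = β * (((a⁻¹ : ℝ) : ℂ)) := by push_cast; ring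
    rw [this, Complex.log_mul_ofReal _ (inv_pos.mpr ha) _ hβ, ← Complex.ofReal_log ha.le]
    push_cast [Real.log_inv]
    ring

lemma rescaleC (c u : ℂ) : rescale c (PowerSeries.C u) = PowerSeries.C u := by
  ext n
  rcases eq_or_ne n 0 with rfl | h
  · simp [coeff_rescale, coeff_C]
  · simp [coeff_rescale, coeff_C, h]

lemma rescale_mk' (c : ℂ) (f : ℕ → ℂ) : rescale c (mk f) = mk fun n => c ^ n * f n := by
  ext n; rw [coeff_rescale, coeff_mk, coeff_mk]

lemma coeff_triple (w : ℂ) (f g h : ℕ → ℂ) (n : ℕ) :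
    PowerSeries.coeff n (PowerSeries.C w *
      (PowerSeries.mk f * (PowerSeries.mk g * PowerSeries.mk h))) =
    ∑ j ∈ range (n + 1), ∑ i ∈ range (j + 1), w * f (n - j) * g i * h (j - i) := by
  rw [coeff_C_mul, coeff_mul, Finset.Nat.sum_antidiagonal_eq_sum_range_succ_mk]
  rw [Finset.mul_sum, ← Finset.sum_range_reflect]
  refine Finset.sum_congr rfl fun j hj => ?_
  have hj' : j ≤ n := Nat.lt_succ_iff.mp (Finset.mem_range.mp hj)
  simp only [Nat.succ_sub_one]
  rw [Nat.sub_sub_self hj']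
  simp only [coeff_mk, coeff_mul, Finset.Nat.sum_antidiagonal_eq_sum_range_succ_mk, coeff_mk]
  rw [Finset.mul_sum, Finset.mul_sum]
  refine Finset.sum_congr rfl fun i hi => ?_
  ring

set_option maxHeartbeats 4000000 in
/-- Symmetry identity I for the unified Apostol type-truncated exponential-Gould-Hopper
polynomials `EHP A n x y z = _{eH}P_{n,β}^{(A,m,r)}(x,y,z;k,a,b)` and the power-sum
quantities `S i N = S_i(N;(β/a)^b)`.  Generating functions are stated with denominators
cleared. -/
theorem symmetry_identity_I
    (a b : ℝ) (ha : 0 < a) (hb : 0 < b) (β : ℂ) (k m r α : ℕ) (hα : 1 ≤ α)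
    (EHP : ℕ → ℕ → ℝ → ℝ → ℝ → ℂ) (S : ℕ → ℕ → ℂ)
    (hEHP : ∀ (A : ℕ) (x y z : ℝ),
      (PowerSeries.C ((((2 : ℝ) ^ ((1 : ℝ) - (k : ℝ)) : ℝ) : ℂ)) *
          PowerSeries.X ^ k) ^ A * (expC (x : ℂ) * expMonC (y : ℂ) m) =
        (PowerSeries.C (β ^ (b : ℂ)) * expC 1 - PowerSeries.C ((a ^ b : ℝ) : ℂ)) ^ A *
          ((1 - PowerSeries.C (z : ℂ) * PowerSeries.X ^ r) *
            PowerSeries.mk (fun n => EHP A n x y z / n.factorial)))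
    (hS : ∀ N : ℕ,
      PowerSeries.C ((β / (a : ℂ)) ^ (b : ℂ)) * expC ((N : ℂ) + 1) - 1 =
        (PowerSeries.C ((β / (a : ℂ)) ^ (b : ℂ)) * expC 1 - 1) *
          PowerSeries.mk (fun i => S i N / i.factorial))
    (l q : ℕ) (hl : 0 < l) (hq : 0 < q) (x y z X1 Y1 Z1 : ℝ) (n : ℕ) :
    (∑ j ∈ Finset.range (n + 1), ∑ i ∈ Finset.range (j + 1),
        ((l : ℂ) ^ (n - j) * (q : ℂ) ^ j /
            ((n - j).factorial * i.factorial * (j - i).factorial)) *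
          EHP α (n - j) ((q : ℝ) * x) ((q : ℝ) ^ m * y) ((q : ℝ) ^ r * z) *
          S i (l - 1) *
          EHP (α - 1) (j - i) ((l : ℝ) * X1) ((l : ℝ) ^ m * Y1) ((l : ℝ) ^ r * Z1) *
          (q : ℂ) ^ (k * α) * (l : ℂ) ^ (k * (α - 1))) =
      ∑ j ∈ Finset.range (n + 1), ∑ i ∈ Finset.range (j + 1),
        ((q : ℂ) ^ (n - j) * (l : ℂ) ^ j /
            ((n - j).factorial * i.factorial * (j - i).factorial)) *
          EHP α (n - j) ((l : ℝ) * x) ((l : ℝ) ^ m * y) ((l : ℝ) ^ r * z) *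
          S i (q - 1) *
          EHP (α - 1) (j - i) ((q : ℝ) * X1) ((q : ℝ) ^ m * Y1) ((q : ℝ) ^ r * Z1) *
          (l : ℂ) ^ (k * α) * (q : ℂ) ^ (k * (α - 1)) := by
  obtain ⟨α', rfl⟩ : ∃ α', α = α' + 1 := ⟨α - 1, (Nat.succ_pred_eq_of_pos hα).symm⟩
  simp only [Nat.add_sub_cancel]
  set c2 : ℂ := (((2 : ℝ) ^ ((1 : ℝ) - (k : ℝ)) : ℝ) : ℂ) with hc2def
  set A0 : ℂ := ((a ^ b : ℝ) : ℂ) with hA0def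
  set lam : ℂ := (β / (a : ℂ)) ^ (b : ℂ) with hlamdef
  have hA0 : A0 ≠ 0 := Complex.ofReal_ne_zero.mpr (Real.rpow_pos_of_pos ha b).ne'
  have hc2 : c2 ≠ 0 := Complex.ofReal_ne_zero.mpr (Real.rpow_pos_of_pos two_pos _).ne'
  have hlne : ((l : ℂ)) ≠ 0 := Nat.cast_ne_zero.mpr hl.ne'
  have hqne : ((q : ℂ)) ≠ 0 := Nat.cast_ne_zero.mpr hq.ne'
  have hconst : PowerSeries.C (β ^ (b : ℂ)) * expC 1 - PowerSeries.C A0 =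
      PowerSeries.C A0 * (PowerSeries.C lam * expC 1 - 1) := by
    rw [← cpow_div_mul a ha β b hb.ne', ← hlamdef, ← hA0def, map_mul]
    ring
  -- rescaled EHP generating identity
  have hE : ∀ (A : ℕ) (x y z : ℝ) (t : ℂ),
      (PowerSeries.C c2 * (PowerSeries.C t * X) ^ k) ^ A *
          (expC (t * (x : ℂ)) * expMonC (t ^ m * (y : ℂ)) m) =
        (PowerSeries.C A0) ^ A * ((PowerSeries.C lam * expC t - 1) ^ A *
          ((1 - PowerSeries.C (z : ℂ) * (PowerSeries.C t * X) ^ r) *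
            rescale t (PowerSeries.mk fun n => EHP A n x y z / n.factorial))) := by
    intro A x y z t
    have h := hEHP A x y z
    rw [hconst, mul_pow, mul_assoc] at h
    have h2 := congrArg (rescale t) h
    simpa only [map_mul, map_pow, map_sub, map_one, rescale_X, rescale_expC,
      rescale_expMonC, rescaleC, mul_one, mul_pow, mul_assoc] using h2
  -- rescaled S generating identity
  have hSr : ∀ (N : ℕ) (t : ℂ),
      PowerSeries.C lam * expC (t * ((N : ℂ) + 1)) - 1 =
        (PowerSeries.C lam * expC t - 1) *
          rescale t (PowerSeries.mk fun i => S i N / i.factorial) := by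
    intro N t
    have h2 := congrArg (rescale t) (hS N)
    simpa only [map_mul, map_sub, map_one, rescale_expC, rescaleC, mul_one] using h2
  have hcl : ((l - 1 : ℕ) : ℂ) + 1 = (l : ℂ) := by
    rw [Nat.cast_sub hl]; ring
  have hcq : ((q - 1 : ℕ) : ℂ) + 1 = (q : ℂ) := by
    rw [Nat.cast_sub hq]; ring
  have E2 : PowerSeries.C lam * expC ((q : ℂ) * (l : ℂ)) - 1 =
      (PowerSeries.C lam * expC (q : ℂ) - 1) *
        rescale (q : ℂ) (PowerSeries.mk fun i => S i (l - 1) / i.factorial) := by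
    have h2 := hSr (l - 1) (q : ℂ); rw [hcl] at h2; exact h2
  have E2s : PowerSeries.C lam * expC ((l : ℂ) * (q : ℂ)) - 1 =
      (PowerSeries.C lam * expC (l : ℂ) - 1) *
        rescale (l : ℂ) (PowerSeries.mk fun i => S i (q - 1) / i.factorial) := by
    have h2 := hSr (q - 1) (l : ℂ); rw [hcq] at h2; exact h2
  have E1 := hE (α' + 1) ((q : ℝ) * x) ((q : ℝ) ^ m * y) ((q : ℝ) ^ r * z) (l : ℂ)
  have E3 := hE α' ((l : ℝ) * X1) ((l : ℝ) ^ m * Y1) ((l : ℝ) ^ r * Z1) (q : ℂ)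
  have E1s := hE (α' + 1) ((l : ℝ) * x) ((l : ℝ) ^ m * y) ((l : ℝ) ^ r * z) (q : ℂ)
  have E3s := hE α' ((q : ℝ) * X1) ((q : ℝ) ^ m * Y1) ((q : ℝ) ^ r * Z1) (l : ℂ)
  push_cast at E1 E3 E1s E3s
  -- the truncation factors are nonzero
  have hzgen : ∀ (A : ℕ) (t w xx yy : ℂ) (F : PowerSeries ℂ), t ≠ 0 →
      ((PowerSeries.C) c2 * ((PowerSeries.C) t * X) ^ k) ^ A * (expC xx * expMonC yy m) =
        (PowerSeries.C) A0 ^ A * (((PowerSeries.C) lam * expC t - 1) ^ A *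
          ((1 - (PowerSeries.C) w * ((PowerSeries.C) t * X) ^ r) * F)) →
      (1 - (PowerSeries.C) w * ((PowerSeries.C) t * X) ^ r) ≠ 0 := by
    intro A t w xx yy F ht heq h0
    rw [h0, zero_mul, mul_zero, mul_zero] at heq
    exact (mul_ne_zero (pow_ne_zero _ (mul_ne_zero (C_ne_zero' hc2)
      (pow_ne_zero _ (mul_ne_zero (C_ne_zero' ht) X_ne_zero))))
      (mul_ne_zero (expC_ne_zero _) (expMonC_ne_zero _ _))) heq
  have hZ1 := hzgen _ _ _ _ _ _ hlne E1
  have hZ3 := hzgen _ _ _ _ _ _ hqne E3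
  have hdl := dd_ne_zero lam _ hlne
  have hdq := dd_ne_zero lam _ hqne
  simp only [map_mul, map_pow, rescale_mk'] at E1 E2 E3 E1s E2s E3s hZ1 hZ3
  have hCC : ∀ (u v : ℂ) (T : PowerSeries ℂ),
      PowerSeries.C u * (PowerSeries.C v * T) = PowerSeries.C (u * v) * T := by
    intro u v T; rw [← mul_assoc, ← map_mul]
  have hmain :
      (PowerSeries.C (q : ℂ)) ^ (k * (α' + 1)) * ((PowerSeries.C (l : ℂ)) ^ (k * α') *
        ((PowerSeries.mk fun n' => (l : ℂ) ^ n' *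
            (EHP (α' + 1) n' ((q : ℝ) * x) ((q : ℝ) ^ m * y) ((q : ℝ) ^ r * z) / n'.factorial)) *
          ((PowerSeries.mk fun i => (q : ℂ) ^ i * (S i (l - 1) / i.factorial)) *
            (PowerSeries.mk fun n' => (q : ℂ) ^ n' *
              (EHP α' n' ((l : ℝ) * X1) ((l : ℝ) ^ m * Y1) ((l : ℝ) ^ r * Z1) / n'.factorial))))) =
      (PowerSeries.C (l : ℂ)) ^ (k * (α' + 1)) * ((PowerSeries.C (q : ℂ)) ^ (k * α') *
        ((PowerSeries.mk fun n' => (q : ℂ) ^ n' *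
            (EHP (α' + 1) n' ((l : ℝ) * x) ((l : ℝ) ^ m * y) ((l : ℝ) ^ r * z) / n'.factorial)) *
          ((PowerSeries.mk fun i => (l : ℂ) ^ i * (S i (q - 1) / i.factorial)) *
            (PowerSeries.mk fun n' => (l : ℂ) ^ n' *
              (EHP α' n' ((q : ℝ) * X1) ((q : ℝ) ^ m * Y1) ((q : ℝ) ^ r * Z1) / n'.factorial))))) := by
    apply mul_left_cancel₀ (a := (PowerSeries.C A0) ^ (α' + 1) * ((PowerSeries.C A0) ^ α' *
      (((PowerSeries.C) lam * expC (l : ℂ) - 1) ^ (α' + 1) *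
        (((PowerSeries.C) lam * expC (q : ℂ) - 1) ^ (α' + 1) *
          ((1 - (PowerSeries.C) ((q : ℂ)) ^ r * (PowerSeries.C) ((z : ℂ)) *
              ((PowerSeries.C) ((l : ℂ)) * PowerSeries.X) ^ r) *
            (1 - (PowerSeries.C) ((l : ℂ)) ^ r * (PowerSeries.C) ((Z1 : ℂ)) *
              ((PowerSeries.C) ((q : ℂ)) * PowerSeries.X) ^ r))))))
    · exact mul_ne_zero (pow_ne_zero _ (C_ne_zero' hA0)) (mul_ne_zero
        (pow_ne_zero _ (C_ne_zero' hA0)) (mul_ne_zero (pow_ne_zero _ hdl)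
        (mul_ne_zero (pow_ne_zero _ hdq) (mul_ne_zero hZ1 hZ3))))
    · have swap1 : ∀ c : ℂ, (q : ℂ) * ((l : ℂ) * c) = (l : ℂ) * ((q : ℂ) * c) := fun c => by ring
      have swap2 : ∀ c : ℂ, (q : ℂ) ^ m * ((l : ℂ) ^ m * c) = (l : ℂ) ^ m * ((q : ℂ) ^ m * c) :=
        fun c => by ring
      have swap4 : (q : ℂ) * (l : ℂ) = (l : ℂ) * (q : ℂ) := mul_comm _ _
      rw [swap1, swap2] at E3 E1s
      rw [swap4] at E2
      have M1 := congrArg₂ (· * ·) (congrArg₂ (· * ·) E1 E2) E3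
      have M2 := congrArg₂ (· * ·) (congrArg₂ (· * ·) E1s E2s) E3s
      linear_combination
        ((PowerSeries.C (l : ℂ)) ^ (k * (α' + 1)) * (PowerSeries.C (q : ℂ)) ^ (k * α')) * M2
        - ((PowerSeries.C (q : ℂ)) ^ (k * (α' + 1)) * (PowerSeries.C (l : ℂ)) ^ (k * α')) * M1
  have hco := congrArg (PowerSeries.coeff n) hmain
  simp only [← map_pow] at hco
  rw [hCC, hCC, coeff_triple, coeff_triple] at hco
  refine Eq.trans ?_ (hco.trans ?_)
  · refine Finset.sum_congr rfl fun j hj => Finset.sum_congr rfl fun i hi => ?_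
    have hij : i ≤ j := Nat.lt_succ_iff.mp (Finset.mem_range.mp hi)
    rw [show ((q : ℂ)) ^ j = (q : ℂ) ^ i * (q : ℂ) ^ (j - i) from by
      rw [← pow_add, Nat.add_sub_cancel' hij]]
    ring
  · refine Finset.sum_congr rfl fun j hj => Finset.sum_congr rfl fun i hi => ?_
    have hij : i ≤ j := Nat.lt_succ_iff.mp (Finset.mem_range.mp hi)
    rw [show ((l : ℂ)) ^ j = (l : ℂ) ^ i * (l : ℂ) ^ (j - i) from by
      rw [← pow_add, Nat.add_sub_cancel' hij]]
    ring
end
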